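/- Let Δ be a {0,1}-valued random variable, Y an integrable random variable, and G a sigma-algebra with Y measurable w.r.t. a larger sigma-algebra F, E[Δ | F] = E[Δ | G] = λ, and λ ≥ c > 0 a.s. Then the weighted estimator satisfies Var(YΔ/λ) ≥ Var(Y), with equality iff λ = 1 a.s. on {E[Y²|G] > 0}. -/

import Mathlib

open MeasureTheory ProbabilityTheory

/-- Variance inflation of inverse-probability weighting: with `Δ ∈ {0,1}`,
`E[Δ | F] = E[Δ | G] = λ ≥ c > 0` a.s., and `Y` square-integrable and
`F`-measurable, the weighted variable `YΔ/λ` has the same mean as `Y` but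
`Var(YΔ/λ) ≥ Var(Y)`, with equality iff `λ = 1` a.s. on `{E[Y²|G] > 0}`. -/
theorem iiw_variance_inflation {Ω : Type*} (F G : MeasurableSpace Ω) {m0 : MeasurableSpace Ω} (μ : Measure Ω)
    [IsProbabilityMeasure μ]
    (hGF : G ≤ F) (hF : F ≤ m0)
    (Y Δ lam : Ω → ℝ)
    (hY2 : Integrable (fun ω => Y ω ^ 2) μ) (hYmeas : StronglyMeasurable[F] Y)
    (hΔmeas : Measurable Δ) (hΔ01 : ∀ ω, Δ ω = 0 ∨ Δ ω = 1)
    (hlamG : StronglyMeasurable[G] lam)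
    (h1 : μ[Δ | F] =ᵐ[μ] lam) (h2 : μ[Δ | G] =ᵐ[μ] lam)
    (c : ℝ) (hc : 0 < c) (hlb : ∀ᵐ ω ∂μ, c ≤ lam ω) :
    variance Y μ ≤ variance (fun ω => Y ω * Δ ω / lam ω) μ ∧
    (variance (fun ω => Y ω * Δ ω / lam ω) μ = variance Y μ ↔
      ∀ᵐ ω ∂μ, 0 < (μ[fun ω => Y ω ^ 2 | G]) ω → lam ω = 1) := by
  have hGm0 : G ≤ m0 := hGF.trans hF
  have hYm0 : StronglyMeasurable[m0] Y := hYmeas.mono hF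
  have hlamF : StronglyMeasurable[F] lam := hlamG.mono hGF
  have hlamm0 : StronglyMeasurable[m0] lam := hlamG.mono hGm0
  have hΔsm : StronglyMeasurable[m0] Δ := hΔmeas.stronglyMeasurable
  have hΔ0 : ∀ ω, 0 ≤ Δ ω := fun ω => by rcases hΔ01 ω with h | h <;> simp [h]
  have hΔle1 : ∀ ω, Δ ω ≤ 1 := fun ω => by rcases hΔ01 ω with h | h <;> simp [h]
  have hΔint : Integrable Δ μ := by
    refine Integrable.mono' (integrable_const 1) hΔsm.aestronglyMeasurable ?_
    filter_upwards with ω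
    rw [Real.norm_eq_abs, abs_of_nonneg (hΔ0 ω)]; exact hΔle1 ω
  have hub : ∀ᵐ ω ∂μ, lam ω ≤ 1 := by
    have hmono : μ[Δ | G] ≤ᵐ[μ] μ[(fun _ => (1:ℝ)) | G] :=
      condExp_mono hΔint (integrable_const 1) (Filter.Eventually.of_forall hΔle1)
    have hcst : μ[(fun _ => (1:ℝ)) | G] = fun _ => (1:ℝ) := condExp_const hGm0 1
    filter_upwards [h2, hmono] with ω hω hω2
    rw [hcst] at hω2
    calc lam ω = (μ[Δ|G]) ω := hω.symm
    _ ≤ 1 := hω2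
  -- integrability facts
  have hY2mem := (memLp_two_iff_integrable_sq (hYm0.aestronglyMeasurable (μ := μ))).2 hY2
  have hYint : Integrable Y μ := hY2mem.integrable one_le_two
  -- key pull-out lemma relative to F
  have key : ∀ f : Ω → ℝ, StronglyMeasurable[F] f → Integrable (f * Δ) μ →
      ∫ ω, f ω * Δ ω ∂μ = ∫ ω, f ω * lam ω ∂μ := by
    intro f hfm hint
    have hpull : μ[f * Δ | F] =ᵐ[μ] f * μ[Δ | F] :=
      condExp_mul_of_stronglyMeasurable_left hfm hint hΔint
    have e1 : ∫ ω, f ω * Δ ω ∂μ = ∫ ω, (μ[f * Δ | F]) ω ∂μ := (integral_condExp hF).symm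
    rw [e1]
    refine integral_congr_ae ?_
    filter_upwards [hpull, h1] with ω hω hω1
    rw [hω]; simp only [Pi.mul_apply, hω1]
  -- mean identity
  have hYdiv : StronglyMeasurable[F] (fun ω => Y ω / lam ω) :=
    (hYmeas.measurable.div hlamF.measurable).stronglyMeasurable
  have hI1 : Integrable ((fun ω => Y ω / lam ω) * Δ) μ := by
    refine Integrable.mono' (hYint.abs.mul_const (1/c)) ?_ ?_
    · exact ((hYdiv.mono hF).mul hΔsm).aestronglyMeasurable
    · filter_upwards [hlb] with ω hω
      have hl : 0 < lam ω := lt_of_lt_of_le hc hω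
      rcases hΔ01 ω with h | h
      · simp only [Pi.mul_apply, h, mul_zero, norm_zero]
        positivity
      · simp only [Pi.mul_apply, h, mul_one, Real.norm_eq_abs, abs_div, abs_of_pos hl]
        rw [div_eq_mul_one_div]
        exact mul_le_mul_of_nonneg_left (one_div_le_one_div_of_le hc hω) (abs_nonneg _)
  have hEW : ∫ ω, Y ω * Δ ω / lam ω ∂μ = ∫ ω, Y ω ∂μ := by
    have e1 : ∫ ω, Y ω * Δ ω / lam ω ∂μ = ∫ ω, (Y ω / lam ω) * Δ ω ∂μ :=
      integral_congr_ae (Filter.Eventually.of_forall fun ω => by ring)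
    have e2 : ∫ ω, (Y ω / lam ω) * Δ ω ∂μ = ∫ ω, (Y ω / lam ω) * lam ω ∂μ :=
      key _ hYdiv hI1
    rw [e1, e2]
    refine integral_congr_ae ?_
    filter_upwards [hlb] with ω hω
    have hl : lam ω ≠ 0 := ne_of_gt (lt_of_lt_of_le hc hω)
    field_simp
  -- second moment identity
  have hYdiv2 : StronglyMeasurable[F] (fun ω => Y ω ^ 2 / lam ω ^ 2) :=
    ((hYmeas.measurable.pow_const 2).div (hlamF.measurable.pow_const 2)).stronglyMeasurable
  have hI2 : Integrable ((fun ω => Y ω ^ 2 / lam ω ^ 2) * Δ) μ := by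
    refine Integrable.mono' (hY2.mul_const (1/c^2)) ?_ ?_
    · exact ((hYdiv2.mono hF).mul hΔsm).aestronglyMeasurable
    · filter_upwards [hlb] with ω hω
      have hl : 0 < lam ω := lt_of_lt_of_le hc hω
      rcases hΔ01 ω with h | h
      · simp only [Pi.mul_apply, h, mul_zero, norm_zero]
        positivity
      · simp only [Pi.mul_apply, h, mul_one, Real.norm_eq_abs, abs_div, abs_of_pos hl]
        rw [abs_of_nonneg (sq_nonneg (Y ω)), abs_of_pos (pow_pos hl 2), div_eq_mul_one_div]
        refine mul_le_mul_of_nonneg_left (one_div_le_one_div_of_le (pow_pos hc 2) ?_)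
          (sq_nonneg _)
        exact pow_le_pow_left₀ hc.le hω 2
  have hI3 : Integrable (fun ω => Y ω ^ 2 / lam ω) μ := by
    refine Integrable.mono' (hY2.mul_const (1/c)) ?_ ?_
    · exact ((hYm0.measurable.pow_const 2).div hlamm0.measurable).aestronglyMeasurable
    · filter_upwards [hlb] with ω hω
      have hl : 0 < lam ω := lt_of_lt_of_le hc hω
      rw [Real.norm_eq_abs, abs_div, abs_of_nonneg (sq_nonneg (Y ω)), abs_of_pos hl,
        div_eq_mul_one_div]
      exact mul_le_mul_of_nonneg_left (one_div_le_one_div_of_le hc hω) (sq_nonneg _)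
  have hW2eq : ∀ ω, (Y ω * Δ ω / lam ω) ^ 2 = (Y ω ^ 2 / lam ω ^ 2) * Δ ω := by
    intro ω
    rcases hΔ01 ω with h | h <;> simp [h] <;> ring
  have hEW2 : ∫ ω, (Y ω * Δ ω / lam ω) ^ 2 ∂μ = ∫ ω, Y ω ^ 2 / lam ω ∂μ := by
    have e1 : ∫ ω, (Y ω * Δ ω / lam ω) ^ 2 ∂μ = ∫ ω, (Y ω ^ 2 / lam ω ^ 2) * Δ ω ∂μ :=
      integral_congr_ae (Filter.Eventually.of_forall fun ω => hW2eq ω)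
    have e2 : ∫ ω, (Y ω ^ 2 / lam ω ^ 2) * Δ ω ∂μ = ∫ ω, (Y ω ^ 2 / lam ω ^ 2) * lam ω ∂μ :=
      key _ hYdiv2 hI2
    rw [e1, e2]
    refine integral_congr_ae ?_
    filter_upwards [hlb] with ω hω
    have hl : lam ω ≠ 0 := ne_of_gt (lt_of_lt_of_le hc hω)
    field_simp
  -- Memℒp of the weighted variable
  have hWsq : Integrable (fun ω => (Y ω * Δ ω / lam ω) ^ 2) μ :=
    hI2.congr (Filter.Eventually.of_forall fun ω => (hW2eq ω).symm)
  have hWmem : MemLp (fun ω => Y ω * Δ ω / lam ω) 2 μ := (memLp_two_iff_integrable_sq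
      (((hYm0.measurable.mul hΔsm.measurable).div
        hlamm0.measurable).aestronglyMeasurable (μ := μ))).2 hWsq
  -- define h and Z
  set h : Ω → ℝ := fun ω => (1 - lam ω) / lam ω with hh
  set Z : Ω → ℝ := μ[fun ω => Y ω ^ 2 | G] with hZ
  have hZint : Integrable Z μ := integrable_condExp
  have hZnn : 0 ≤ᵐ[μ] Z := condExp_nonneg (Filter.Eventually.of_forall fun ω => sq_nonneg _)
  have hhm : StronglyMeasurable[G] h :=
    ((measurable_const.sub hlamG.measurable).div hlamG.measurable).stronglyMeasurable
  have hhbd : ∀ᵐ ω ∂μ, 0 ≤ h ω ∧ h ω ≤ 1/c := by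
    filter_upwards [hlb, hub] with ω hω hω1
    have hl : 0 < lam ω := lt_of_lt_of_le hc hω
    constructor
    · exact div_nonneg (by linarith) hl.le
    · rw [div_le_div_iff₀ hl hc]
      nlinarith
  have hIhY2 : Integrable (h * fun ω => Y ω ^ 2) μ := by
    refine Integrable.mono' (hY2.mul_const (1/c)) ?_ ?_
    · exact (((hhm.mono hGm0).mono le_rfl).mul (hYm0.pow 2)).aestronglyMeasurable
    · filter_upwards [hhbd] with ω hp
      obtain ⟨h0, h1c⟩ := hp
      simp only [Pi.mul_apply, Real.norm_eq_abs, abs_mul, abs_of_nonneg h0,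
        abs_of_nonneg (sq_nonneg (Y ω))]
      rw [mul_comm]
      exact mul_le_mul_of_nonneg_left h1c (sq_nonneg _)
  have hIhZ : Integrable (fun ω => h ω * Z ω) μ := by
    refine Integrable.mono' (hZint.abs.mul_const (1/c)) ?_ ?_
    · exact ((hhm.mono hGm0).mul (stronglyMeasurable_condExp.mono hGm0)).aestronglyMeasurable
    · filter_upwards [hhbd] with ω hp
      obtain ⟨h0, h1c⟩ := hp
      rw [Real.norm_eq_abs, abs_mul, abs_of_nonneg h0, mul_comm]
      exact mul_le_mul_of_nonneg_left h1c (abs_nonneg _)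
  -- tower property
  have htow : ∫ ω, h ω * Y ω ^ 2 ∂μ = ∫ ω, h ω * Z ω ∂μ := by
    have hpull : μ[h * (fun ω => Y ω ^ 2) | G] =ᵐ[μ] h * Z :=
      condExp_mul_of_stronglyMeasurable_left hhm hIhY2 hY2
    have e1 : ∫ ω, h ω * Y ω ^ 2 ∂μ = ∫ ω, (μ[h * (fun ω => Y ω ^ 2) | G]) ω ∂μ :=
      (integral_condExp hGm0).symm
    rw [e1]
    exact integral_congr_ae hpull
  -- gap identity
  have hgap : variance (fun ω => Y ω * Δ ω / lam ω) μ - variance Y μ = ∫ ω, h ω * Z ω ∂μ := by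
    rw [variance_eq_sub hWmem, variance_eq_sub hY2mem]
    simp only [Pi.pow_apply]
    rw [hEW, hEW2]
    have e2 : ∫ ω, Y ω ^ 2 / lam ω ∂μ - ∫ ω, Y ω ^ 2 ∂μ = ∫ ω, h ω * Y ω ^ 2 ∂μ := by
      rw [← integral_sub hI3 hY2]
      refine integral_congr_ae ?_
      filter_upwards [hlb] with ω hω
      have hl : lam ω ≠ 0 := ne_of_gt (lt_of_lt_of_le hc hω)
      simp only [hh]
      field_simp
    linarith [e2, htow]
  have hnn : 0 ≤ᵐ[μ] fun ω => h ω * Z ω := by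
    filter_upwards [hhbd, hZnn] with ω hp hz
    exact mul_nonneg hp.1 hz
  constructor
  · have : 0 ≤ ∫ ω, h ω * Z ω ∂μ := integral_nonneg_of_ae hnn
    linarith [hgap]
  · rw [show (variance (fun ω => Y ω * Δ ω / lam ω) μ = variance Y μ ↔
        ∫ ω, h ω * Z ω ∂μ = 0) from ⟨fun hx => by linarith [hgap], fun hx => by linarith [hgap]⟩]
    rw [integral_eq_zero_iff_of_nonneg_ae hnn hIhZ]
    constructor
    · intro hae
      filter_upwards [hae, hlb, hub] with ω hω hω1 hω2 hzpos
      have hl : 0 < lam ω := lt_of_lt_of_le hc hω1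
      have hprod : h ω * Z ω = 0 := hω
      have hh0 : h ω = 0 := by
        rcases mul_eq_zero.mp hprod with h | h
        · exact h
        · exact absurd h (ne_of_gt hzpos)
      have h10 : 1 - lam ω = 0 := by
        rcases div_eq_zero_iff.mp hh0 with h | h
        · exact h
        · exact absurd h (ne_of_gt hl)
      linarith
    · intro hae
      filter_upwards [hae, hlb, hZnn] with ω hω hω1 hz
      rcases eq_or_lt_of_le hz with hz0 | hzpos
      · show h ω * Z ω = 0
        have hz0' : Z ω = 0 := by simpa using hz0.symm
        rw [hz0', mul_zero]
      · have hl1 : lam ω = 1 := hω hzpos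
        show h ω * Z ω = 0
        simp only [hh, hl1, sub_self, zero_div, zero_mul]
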